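/- arXiv:1906.03789 — 6 statements merged into one kernel-verified Lean document; each statement's English description precedes it below -/
import Mathlib

section
/- Let C be a small category and e an object of C such that C satisfies the left-Ore condition at e and is weakly left-cancellative at e. Then there is a group structure on the quotient X/~ such that (t/s)·(t'/s') = (t ≫ f)/(s' ≫ f') for all pairs (t,s), (t',s') ∈ X and all morphisms f, f' with s ≫ f = t' ≫ f', the class t/t is the identity element for every morphism t with source e, and (t/s)⁻¹ = s/t. -/
open CategoryTheory

universe v u

/-- Pairs of morphisms with source `e` and a common target. -/
def Frac {C : Type u} [Category.{v} C] (e : C) : Type max u v :=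
  Σ b : C, (e ⟶ b) × (e ⟶ b)

/-- The basic relation `(t, s) ∼ (t ≫ f, s ≫ f)` generating the equivalence
relation on fractions. -/
inductive FracRel {C : Type u} [Category.{v} C] (e : C) : Frac e → Frac e → Prop
  | mk {b d : C} (t s : e ⟶ b) (f : b ⟶ d) :
      FracRel e ⟨b, (t, s)⟩ ⟨d, (t ≫ f, s ≫ f)⟩

/-
Fractions `t/s` are multiplied by completing the span `(s, t')` to a commutative square with
the left-Ore condition. Any two completions agree after a further common extension, obtained
from the Ore condition and weak left-cancellability applied first at `s`, then at `t'`.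
Hence the product does not depend on the chosen square, nor on the representatives, and the
group laws reduce to choosing suitable squares.
-/

section

variable {C : Type u} [Category.{v} C]

def LeftOreAt (e : C) : Prop :=
  ∀ {b c : C} (p : e ⟶ b) (q : e ⟶ c), ∃ (d : C) (h : b ⟶ d) (k : c ⟶ d), p ≫ h = q ≫ k

def WeaklyLeftCancellativeAt (e : C) : Prop :=
  ∀ {b c : C} (f : e ⟶ b) (p q : b ⟶ c), f ≫ p = f ≫ q → ∃ (d : C) (g : c ⟶ d), p ≫ g = q ≫ g

variable {e : C}

theorem exists_common_extension (hOre : LeftOreAt e) (hCancel : WeaklyLeftCancellativeAt e)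
    {b b' d₁ d₂ : C} {s : e ⟶ b} {t' : e ⟶ b'} {f : b ⟶ d₁} {f' : b' ⟶ d₁}
    {g : b ⟶ d₂} {g' : b' ⟶ d₂} (hf : s ≫ f = t' ≫ f') (hg : s ≫ g = t' ≫ g') :
    ∃ (D : C) (h : d₁ ⟶ D) (k : d₂ ⟶ D), f ≫ h = g ≫ k ∧ f' ≫ h = g' ≫ k := by
  obtain ⟨d, h, k, hhk⟩ := hOre (s ≫ f) (s ≫ g)
  obtain ⟨d', u, hu⟩ := hCancel s (f ≫ h) (g ≫ k) (by simpa using hhk)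
  obtain ⟨D, v, hv⟩ := hCancel t' (f' ≫ h ≫ u) (g' ≫ k ≫ u) <| by
    calc t' ≫ f' ≫ h ≫ u = s ≫ (f ≫ h) ≫ u := by simp [reassoc_of% hf]
      _ = s ≫ (g ≫ k) ≫ u := by rw [hu]
      _ = t' ≫ g' ≫ k ≫ u := by simp [reassoc_of% hg]
  refine ⟨D, h ≫ u ≫ v, k ≫ u ≫ v, ?_, by simpa using hv⟩
  simpa using congrArg (· ≫ v) hu

namespace Frac

def swap (x : Frac e) : Frac e := ⟨x.1, x.2.swap⟩

theorem mk_eq_mk_comp {b d : C} (t s : e ⟶ b) (f : b ⟶ d) :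
    Quot.mk (FracRel e) ⟨b, (t, s)⟩ = Quot.mk (FracRel e) ⟨d, (t ≫ f, s ≫ f)⟩ :=
  Quot.sound (FracRel.mk t s f)

theorem mk_eq_mk_of_comp_eq {b b' D : C} {t s : e ⟶ b} {t' s' : e ⟶ b'}
    (h : b ⟶ D) (k : b' ⟶ D) (ht : t ≫ h = t' ≫ k) (hs : s ≫ h = s' ≫ k) :
    Quot.mk (FracRel e) ⟨b, (t, s)⟩ = Quot.mk (FracRel e) ⟨b', (t', s')⟩ := by
  rw [mk_eq_mk_comp t s h, mk_eq_mk_comp t' s' k, ht, hs]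

noncomputable def mulRep (hOre : LeftOreAt e) (x y : Frac e) : Quot (FracRel e) :=
  have sq := hOre x.2.2 y.2.1
  Quot.mk _ ⟨sq.choose, (x.2.1 ≫ sq.choose_spec.choose, y.2.2 ≫ sq.choose_spec.choose_spec.choose)⟩

theorem mulRep_eq (hOre : LeftOreAt e) (hCancel : WeaklyLeftCancellativeAt e)
    {b b' d : C} (t s : e ⟶ b) (t' s' : e ⟶ b') (f : b ⟶ d) (f' : b' ⟶ d)
    (hf : s ≫ f = t' ≫ f') :
    mulRep hOre ⟨b, (t, s)⟩ ⟨b', (t', s')⟩ = Quot.mk (FracRel e) ⟨d, (t ≫ f, s' ≫ f')⟩ := by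
  obtain ⟨D, h, k, hfh, hfh'⟩ :=
    exists_common_extension hOre hCancel (hOre s t').choose_spec.choose_spec.choose_spec hf
  exact mk_eq_mk_of_comp_eq h k (by simp [hfh]) (by simp [hfh'])

end Frac

open Frac

variable (hOre : LeftOreAt e) (hCancel : WeaklyLeftCancellativeAt e)

noncomputable def fracMul : Quot (FracRel e) → Quot (FracRel e) → Quot (FracRel e) :=
  Quot.lift₂ (mulRep hOre)
    (by
      rintro ⟨b, t, s⟩ _ _ ⟨t', s', w⟩
      obtain ⟨d, g, g', hg⟩ := hOre s (t' ≫ w)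
      rw [mulRep_eq hOre hCancel t s _ _ g g' hg,
        mulRep_eq hOre hCancel t s t' s' g (w ≫ g') (by simpa using hg)]
      simp)
    (by
      rintro _ _ ⟨b', t', s'⟩ ⟨t, s, w⟩
      obtain ⟨d, g, g', hg⟩ := hOre (s ≫ w) t'
      rw [mulRep_eq hOre hCancel _ _ t' s' g g' hg,
        mulRep_eq hOre hCancel t s t' s' (w ≫ g) g' (by simpa using hg)]
      simp)

def fracOne : Quot (FracRel e) := Quot.mk _ ⟨e, (𝟙 e, 𝟙 e)⟩

def fracInv : Quot (FracRel e) → Quot (FracRel e) :=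
  Quot.map swap (by rintro _ _ ⟨t, s, f⟩; exact FracRel.mk s t f)

theorem fracMul_mk {b b' d : C} (t s : e ⟶ b) (t' s' : e ⟶ b') (f : b ⟶ d) (f' : b' ⟶ d)
    (hf : s ≫ f = t' ≫ f') :
    fracMul hOre hCancel (Quot.mk (FracRel e) ⟨b, (t, s)⟩) (Quot.mk (FracRel e) ⟨b', (t', s')⟩)
      = Quot.mk (FracRel e) ⟨d, (t ≫ f, s' ≫ f')⟩ :=
  mulRep_eq hOre hCancel t s t' s' f f' hf

theorem mk_self_eq_fracOne {b : C} (t : e ⟶ b) :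
    Quot.mk (FracRel e) ⟨b, (t, t)⟩ = fracOne := by
  rw [fracOne, mk_eq_mk_comp (𝟙 e) (𝟙 e) t]
  simp

theorem fracInv_mk {b : C} (t s : e ⟶ b) :
    fracInv (Quot.mk (FracRel e) ⟨b, (t, s)⟩) = Quot.mk (FracRel e) ⟨b, (s, t)⟩ :=
  rfl

theorem fracMul_assoc (x y z : Quot (FracRel e)) :
    fracMul hOre hCancel (fracMul hOre hCancel x y) z =
      fracMul hOre hCancel x (fracMul hOre hCancel y z) := by
  obtain ⟨⟨b, t, s⟩⟩ := x
  obtain ⟨⟨b', t', s'⟩⟩ := y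
  obtain ⟨⟨b'', t'', s''⟩⟩ := z
  obtain ⟨d, f, f', hf⟩ := hOre s t'
  obtain ⟨d', g, g', hg⟩ := hOre (s' ≫ f') t''
  rw [fracMul_mk hOre hCancel t s t' s' f f' hf,
    fracMul_mk hOre hCancel _ _ t'' s'' g g' hg,
    fracMul_mk hOre hCancel t' s' t'' s'' (f' ≫ g) g' (by simpa using hg),
    fracMul_mk hOre hCancel t s _ _ (f ≫ g) (𝟙 _) (by simp [reassoc_of% hf])]
  simp

theorem fracOne_mul (x : Quot (FracRel e)) : fracMul hOre hCancel fracOne x = x := by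
  obtain ⟨⟨b, t, s⟩⟩ := x
  rw [fracOne, fracMul_mk hOre hCancel (𝟙 e) (𝟙 e) t s t (𝟙 b) (by simp)]
  simp

theorem fracMul_one (x : Quot (FracRel e)) : fracMul hOre hCancel x fracOne = x := by
  obtain ⟨⟨b, t, s⟩⟩ := x
  rw [fracOne, fracMul_mk hOre hCancel t s (𝟙 e) (𝟙 e) (𝟙 b) s (by simp)]
  simp

theorem fracInv_mul_cancel (x : Quot (FracRel e)) :
    fracMul hOre hCancel (fracInv x) x = fracOne := by
  obtain ⟨⟨b, t, s⟩⟩ := x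
  rw [fracInv_mk, fracMul_mk hOre hCancel s t t s (𝟙 b) (𝟙 b) rfl]
  exact mk_self_eq_fracOne _

theorem fracMul_inv_cancel (x : Quot (FracRel e)) :
    fracMul hOre hCancel x (fracInv x) = fracOne := by
  obtain ⟨⟨b, t, s⟩⟩ := x
  rw [fracInv_mk, fracMul_mk hOre hCancel t s s t (𝟙 b) (𝟙 b) rfl]
  exact mk_self_eq_fracOne _

end

/-- Let `C` be a small category and `e` an object of `C` such that `C`
satisfies the left-Ore condition at `e` and is weakly left-cancellative at `e`.
Then there is a group structure on the quotient `X/∼` such that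
`(t/s)·(t'/s') = (t ≫ f)/(s' ≫ f')` whenever `s ≫ f = t' ≫ f'`, the class `t/t` is the
identity element for every `t` with source `e`, and `(t/s)⁻¹ = s/t`. -/
theorem stmt0 {C : Type u} [Category.{v} C] (e : C)
    (hOre : ∀ {b c : C} (p : e ⟶ b) (q : e ⟶ c),
      ∃ (d : C) (h : b ⟶ d) (k : c ⟶ d), p ≫ h = q ≫ k)
    (hCancel : ∀ {b c : C} (f : e ⟶ b) (p q : b ⟶ c), f ≫ p = f ≫ q →
      ∃ (d : C) (g : c ⟶ d), p ≫ g = q ≫ g) :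
    ∃ (mul : Quot (FracRel e) → Quot (FracRel e) → Quot (FracRel e))
      (one : Quot (FracRel e)) (inv : Quot (FracRel e) → Quot (FracRel e)),
      -- group axioms
      (∀ x y z, mul (mul x y) z = mul x (mul y z)) ∧
      (∀ x, mul one x = x) ∧
      (∀ x, mul x one = x) ∧
      (∀ x, mul (inv x) x = one) ∧
      (∀ x, mul x (inv x) = one) ∧
      -- the multiplication of fractions
      (∀ {b b' d : C} (t s : e ⟶ b) (t' s' : e ⟶ b') (f : b ⟶ d) (f' : b' ⟶ d),
        s ≫ f = t' ≫ f' →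
        mul (Quot.mk (FracRel e) ⟨b, (t, s)⟩) (Quot.mk (FracRel e) ⟨b', (t', s')⟩)
          = Quot.mk (FracRel e) ⟨d, (t ≫ f, s' ≫ f')⟩) ∧
      -- the identity element
      (∀ {b : C} (t : e ⟶ b), Quot.mk (FracRel e) ⟨b, (t, t)⟩ = one) ∧
      -- inverses
      (∀ {b : C} (t s : e ⟶ b),
        inv (Quot.mk (FracRel e) ⟨b, (t, s)⟩) = Quot.mk (FracRel e) ⟨b, (s, t)⟩) :=
  ⟨fracMul hOre hCancel, fracOne, fracInv, fracMul_assoc hOre hCancel, fracOne_mul hOre hCancel,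
    fracMul_one hOre hCancel, fracInv_mul_cancel hOre hCancel, fracMul_inv_cancel hOre hCancel,
    fracMul_mk hOre hCancel, mk_self_eq_fracOne, fracInv_mk⟩
end

section
/- Let C be a small category and e an object of C such that C satisfies the left-Ore condition at e and is weakly left-cancellative at e. Let t, s : e ⟶ b and t', s' : e ⟶ b' be morphisms, and suppose f : b ⟶ d, f' : b' ⟶ d satisfy s ≫ f = t' ≫ f', and g : b ⟶ d₂, g' : b' ⟶ d₂ satisfy s ≫ g = t' ≫ g'. Then (t ≫ f, s' ≫ f') ~ (t ≫ g, s' ≫ g'); that is, the product of fractions (t/s)·(t'/s') := (t ≫ f)/(s' ≫ f') does not depend on the choice of f, f'. -/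
open CategoryTheory

universe v u

/-!
Two fractions are equivalent as soon as they have a common expansion, so it suffices to find
`x : d ⟶ d₃`, `y : d₂ ⟶ d₃` with `f ≫ x = g ≫ y` and `f' ≫ x = g' ≫ y`. The left-Ore condition
makes `s ≫ f` and `s ≫ g` meet, and weak cancellation of `s` turns this into `f ≫ x₀ = g ≫ y₀`.
Then `t' ≫ f' ≫ x₀ = s ≫ f ≫ x₀ = s ≫ g ≫ y₀ = t' ≫ g' ≫ y₀`, and cancelling `t'` equalizes the
second components as well.
-/

section

variable {C : Type u} [Category.{v} C] (e : C)

def IsLeftOreAt : Prop :=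
  ∀ {b c : C} (p : e ⟶ b) (q : e ⟶ c), ∃ (d : C) (h : b ⟶ d) (k : c ⟶ d), p ≫ h = q ≫ k

def IsWeaklyLeftCancellativeAt : Prop :=
  ∀ {b c : C} (f : e ⟶ b) (p q : b ⟶ c), f ≫ p = f ≫ q → ∃ (d : C) (g : c ⟶ d), p ≫ g = q ≫ g

variable {e}

theorem FracRel.eqvGen_of_comp_eq {b c d : C} {t s : e ⟶ b} {t' s' : e ⟶ c}
    (x : b ⟶ d) (y : c ⟶ d) (ht : t ≫ x = t' ≫ y) (hs : s ≫ x = s' ≫ y) :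
    Relation.EqvGen (FracRel e) ⟨b, (t, s)⟩ ⟨c, (t', s')⟩ := by
  have expand_left := Relation.EqvGen.rel _ _ (FracRel.mk t s x)
  have expand_right := Relation.EqvGen.rel _ _ (FracRel.mk t' s' y)
  rw [ht, hs] at expand_left
  exact expand_left.trans _ _ _ expand_right.symm

theorem exists_comp_eq_comp_of_isLeftOreAt (hOre : IsLeftOreAt e)
    (hCancel : IsWeaklyLeftCancellativeAt e) {b c c' : C} (s : e ⟶ b) (p : b ⟶ c)
    (q : b ⟶ c') : ∃ (d : C) (x : c ⟶ d) (y : c' ⟶ d), p ≫ x = q ≫ y := by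
  obtain ⟨d, h, k, hhk⟩ := hOre (s ≫ p) (s ≫ q)
  obtain ⟨d', u, hu⟩ := hCancel s (p ≫ h) (q ≫ k) (by simpa only [Category.assoc] using hhk)
  exact ⟨d', h ≫ u, k ≫ u, by simpa only [Category.assoc] using hu⟩

theorem exists_common_comp_of_isLeftOreAt (hOre : IsLeftOreAt e)
    (hCancel : IsWeaklyLeftCancellativeAt e) {b b' d d₂ : C} (s : e ⟶ b) (t' : e ⟶ b')
    (f : b ⟶ d) (f' : b' ⟶ d) (hf : s ≫ f = t' ≫ f')
    (g : b ⟶ d₂) (g' : b' ⟶ d₂) (hg : s ≫ g = t' ≫ g') :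
    ∃ (d₃ : C) (x : d ⟶ d₃) (y : d₂ ⟶ d₃), f ≫ x = g ≫ y ∧ f' ≫ x = g' ≫ y := by
  obtain ⟨d₃, x, y, hxy⟩ := exists_comp_eq_comp_of_isLeftOreAt hOre hCancel s f g
  have ht' : t' ≫ f' ≫ x = t' ≫ g' ≫ y :=
    calc t' ≫ f' ≫ x = s ≫ f ≫ x := by rw [← Category.assoc, ← hf, Category.assoc]
      _ = s ≫ g ≫ y := by rw [hxy]
      _ = t' ≫ g' ≫ y := by rw [← Category.assoc, hg, Category.assoc]
  obtain ⟨d₄, v, hv⟩ := hCancel t' _ _ ht'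
  refine ⟨d₄, x ≫ v, y ≫ v, ?_, by simpa only [Category.assoc] using hv⟩
  rw [← Category.assoc, hxy, Category.assoc]

end

/-- Let `C` be a small category satisfying the left-Ore condition at `e` and
weakly left-cancellative at `e`. Let `t, s : e ⟶ b`, `t', s' : e ⟶ b'`, and suppose
`f : b ⟶ d`, `f' : b' ⟶ d` satisfy `s ≫ f = t' ≫ f'`, and `g : b ⟶ d₂`, `g' : b' ⟶ d₂`
satisfy `s ≫ g = t' ≫ g'`. Then `(t ≫ f, s' ≫ f') ∼ (t ≫ g, s' ≫ g')` in the
equivalence relation generated by `FracRel`; i.e. the product of fractions is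
independent of choices. -/
theorem stmt1 {C : Type u} [Category.{v} C] (e : C)
    (hOre : ∀ {b c : C} (p : e ⟶ b) (q : e ⟶ c),
      ∃ (d : C) (h : b ⟶ d) (k : c ⟶ d), p ≫ h = q ≫ k)
    (hCancel : ∀ {b c : C} (f : e ⟶ b) (p q : b ⟶ c), f ≫ p = f ≫ q →
      ∃ (d : C) (g : c ⟶ d), p ≫ g = q ≫ g)
    {b b' d d₂ : C} (t s : e ⟶ b) (t' s' : e ⟶ b')
    (f : b ⟶ d) (f' : b' ⟶ d) (hf : s ≫ f = t' ≫ f')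
    (g : b ⟶ d₂) (g' : b' ⟶ d₂) (hg : s ≫ g = t' ≫ g') :
    Relation.EqvGen (FracRel e) ⟨d, (t ≫ f, s' ≫ f')⟩ ⟨d₂, (t ≫ g, s' ≫ g')⟩ := by
  obtain ⟨d₃, x, y, hfg, hfg'⟩ :=
    exists_common_comp_of_isLeftOreAt hOre hCancel s t' f f' hf g g' hg
  apply FracRel.eqvGen_of_comp_eq x y
  · rw [Category.assoc, hfg, Category.assoc]
  · rw [Category.assoc, hfg', Category.assoc]
end

section
/- Let 0 < α < 1, let β = √(1 − α²), let k be a natural number, and let m₁, …, m_k be real numbers with m_j ≥ 2 for all j. Then ∏_{j=1}^{k} (α^{2m_j} + β^{2m_j}) ≤ (α⁴ + β⁴)^{(∑_{j=1}^{k} m_j)/2}. -/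
/-! Writing `x ^ (2 m) = (x ^ 4) ^ (m / 2)`, each factor is bounded by superadditivity of
`t ↦ t ^ (m / 2)` on `[0, ∞)` (as `m / 2 ≥ 1`), and the bounds multiply to the right-hand side. -/

lemma Real.rpow_two_mul_add_rpow_two_mul_le {a b m : ℝ} (ha : 0 ≤ a) (hb : 0 ≤ b) (hm : 2 ≤ m) :
    a ^ (2 * m) + b ^ (2 * m) ≤ (a ^ 4 + b ^ 4) ^ (m / 2) := by
  have h4 : 2 * m = ((4 : ℕ) : ℝ) * (m / 2) := by push_cast; ring
  rw [h4, Real.rpow_natCast_mul ha, Real.rpow_natCast_mul hb]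
  exact Real.add_rpow_le_rpow_add (by positivity) (by positivity) (by linarith)

theorem stmt5_general (α β : ℝ) (hα0 : 0 < α)
    (hβ : β = Real.sqrt (1 - α ^ 2)) (k : ℕ) (m : Fin k → ℝ) (hm : ∀ j, 2 ≤ m j) :
    ∏ j : Fin k, (α ^ (2 * m j) + β ^ (2 * m j))
      ≤ (α ^ 4 + β ^ 4) ^ ((∑ j : Fin k, m j) / 2) := by
  have hβ0 : 0 ≤ β := hβ ▸ Real.sqrt_nonneg _
  calc ∏ j : Fin k, (α ^ (2 * m j) + β ^ (2 * m j))
      ≤ ∏ j : Fin k, (α ^ 4 + β ^ 4) ^ (m j / 2) :=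
        Finset.prod_le_prod (fun _ _ => by positivity)
          (fun j _ => Real.rpow_two_mul_add_rpow_two_mul_le hα0.le hβ0 (hm j))
    _ = (α ^ 4 + β ^ 4) ^ ((∑ j : Fin k, m j) / 2) := by
        rw [Finset.sum_div, Real.rpow_sum_of_pos (by positivity)]

/-- Let `0 < α < 1`, `β = √(1 − α²)`, `k : ℕ`, and let `m₁, …, m_k` be reals
with `m_j ≥ 2` for all `j`. Then `∏_j (α^(2 m_j) + β^(2 m_j)) ≤ (α⁴ + β⁴)^((∑_j m_j)/2)`,
where powers with real exponents are `Real.rpow`. -/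
theorem stmt5 (α β : ℝ) (hα0 : 0 < α) (hα1 : α < 1)
    (hβ : β = Real.sqrt (1 - α ^ 2)) (k : ℕ) (m : Fin k → ℝ) (hm : ∀ j, 2 ≤ m j) :
    ∏ j : Fin k, (α ^ (2 * m j) + β ^ (2 * m j))
      ≤ (α ^ 4 + β ^ 4) ^ ((∑ j : Fin k, m j) / 2) :=
  stmt5_general α β hα0 hβ k m hm
end

section
/- Let Γ be a group and θ : Γ → Γ an injective group homomorphism. Then there exist a group G, an injective group homomorphism i : Γ → G, and a group automorphism φ : G ≅ G such that φ(i(g)) = i(θ(g)) for all g ∈ Γ. (That is, every injective endomorphism of a group extends to an automorphism of some larger group.) -/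
/-!
The ascending HNN extension `⟨Γ, t | t g t⁻¹ = θ g⟩` does it: `Γ` embeds in it by Britton's
lemma, and conjugation by the stable letter `t` extends `θ`.
-/

universe u

namespace MonoidHom

variable {Γ : Type u} [Group Γ] (θ : Γ →* Γ) (hθ : Function.Injective θ)

abbrev AscendingHNNExtension : Type u :=
  HNNExtension Γ ⊤ θ.range (Subgroup.topEquiv.trans (ofInjective hθ))

theorem conj_t_of (g : Γ) :
    MulAut.conj (HNNExtension.t : θ.AscendingHNNExtension hθ) (HNNExtension.of g) =
      HNNExtension.of (θ g) := by
  rw [MulAut.conj_apply, HNNExtension.t_mul_of (a := ⟨g, Subgroup.mem_top g⟩),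
    mul_inv_cancel_right]
  rfl

end MonoidHom

/-- Let `Γ` be a group and `θ : Γ → Γ` an injective group homomorphism.
Then there exist a group `G`, an injective group homomorphism `i : Γ → G`, and a group
automorphism `φ : G ≃* G` such that `φ (i g) = i (θ g)` for all `g ∈ Γ`: every injective
endomorphism of a group extends to an automorphism of some larger group. -/
theorem stmt8 {Γ : Type u} [Group Γ] (θ : Γ →* Γ) (hθ : Function.Injective θ) :
    ∃ (G : Type u) (_ : Group G) (i : Γ →* G) (φ : G ≃* G),
      Function.Injective i ∧ ∀ g : Γ, φ (i g) = i (θ g) :=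
  ⟨θ.AscendingHNNExtension hθ, inferInstance, HNNExtension.of, MulAut.conj HNNExtension.t,
    HNNExtension.of_injective _, θ.conj_t_of hθ⟩
end

section
/- For every 0 < α < 1 the family (v_x)_{x ∈ M} is an orthonormal family in ℓ²(M × M); consequently there is a unique continuous linear isometry R_α : ℓ²(M) → ℓ²(M × M) with R_α(δ_x) = v_x for all x ∈ M. -/
noncomputable section

/-- The free monoid `M` on the letters `a_j = (j, false)`, `b_j = (j, true)`, `j ∈ ℕ`,
encoded as lists; the empty list is the empty word `e`. -/
abbrev Mword := List (ℕ × Bool)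

/-- The Hilbert space `ℓ²(M)`. -/
abbrev Hone := lp (fun _ : Mword => ℂ) 2

/-- The Hilbert space `ℓ²(M × M)`. -/
abbrev Htwo := lp (fun _ : Mword × Mword => ℂ) 2

/-- The Dirac basis vector `δ_x ∈ ℓ²(M)`. -/
def dirac1 (x : Mword) : Hone := lp.single 2 x 1

/-- The Dirac basis vector `δ_{(u,v)} ∈ ℓ²(M × M)`. -/
def dirac2 (x : Mword × Mword) : Htwo := lp.single 2 x 1

/-- For a nonempty word `x`, the largest index `j` such that `a_j` or `b_j` occurs as a
letter of `x`. -/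
def jmax (x : Mword) : ℕ := (x.map Prod.fst).foldr max 0

/-- The family `v_x`: `v_e = α δ_{(e,e)} + β δ_{(a₀,b₀)}`, and for `x ≠ e` with
`j = j(x)`, `v_x = α δ_{(x a_j, x b_j)} + β δ_{(x a_{j+1}, x b_{j+1})}`. -/
def vfam (α β : ℝ) (x : Mword) : Htwo :=
  if x = [] then
    (α : ℂ) • dirac2 ([], []) + (β : ℂ) • dirac2 ([(0, false)], [(0, true)])
  else
    (α : ℂ) • dirac2 (x ++ [(jmax x, false)], x ++ [(jmax x, true)])
      + (β : ℂ) • dirac2 (x ++ [(jmax x + 1, false)], x ++ [(jmax x + 1, true)])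

lemma inner_dirac2 (p q : Mword × Mword) :
    (inner ℂ (dirac2 p) (dirac2 q) : ℂ) = if p = q then 1 else 0 := by
  rw [dirac2, dirac2, lp.inner_single_left]
  rw [lp.single_apply]
  split_ifs with h
  · subst h; simp [RCLike.inner_apply]
  · simp [RCLike.inner_apply, Pi.single_apply, h]

lemma concat_eq_iff (x y : Mword) (c d : ℕ × Bool) :
    x ++ [c] = y ++ [d] ↔ x = y ∧ c = d := by
  constructor
  · intro h
    obtain ⟨h1, h2⟩ := List.append_inj' h rfl
    exact ⟨h1, by simpa using h2⟩
  · rintro ⟨rfl, rfl⟩; rfl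

lemma vfam_orthonormal (α β : ℝ) (hα0 : 0 < α) (hα1 : α < 1)
    (hβ : β = Real.sqrt (1 - α ^ 2)) : Orthonormal ℂ (vfam α β) := by
  have hsq : (α : ℂ) * α + (β : ℂ) * β = 1 := by
    have h1 : (0:ℝ) ≤ 1 - α ^ 2 := by nlinarith
    have h2 : β ^ 2 = 1 - α ^ 2 := by rw [hβ, Real.sq_sqrt h1]
    have h3 : α * α + β * β = 1 := by nlinarith
    calc (α : ℂ) * α + (β : ℂ) * β = ((α * α + β * β : ℝ) : ℂ) := by push_cast; ring
      _ = 1 := by rw [h3]; norm_num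
  rw [orthonormal_iff_ite]
  intro x y
  by_cases hx : x = [] <;> by_cases hy : y = []
  · subst hx; subst hy
    simp [-Complex.coe_smul, -inner_self_eq_norm_sq_to_K, vfam, inner_add_left, inner_add_right, inner_smul_left, inner_smul_right,
      inner_dirac2, Complex.conj_ofReal, hsq]
  · subst hx
    have h1 : ∀ c : ℕ × Bool, ([] : Mword) ≠ y ++ [c] := by
      intro c h; simpa using congrArg List.length h
    have h2 : ∀ c : ℕ × Bool, [((0:ℕ), false)] ≠ y ++ [c] := by
      intro c h
      have := congrArg List.length h
      simp at this
      exact hy this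
    have h0 : ([] : Mword) ≠ y := fun h => hy h.symm
    simp [-Complex.coe_smul, vfam, hy, h0, h1, h2, Prod.ext_iff, inner_add_left, inner_add_right,
      inner_smul_left, inner_smul_right, inner_dirac2]
  · subst hy
    have h1 : ∀ c : ℕ × Bool, x ++ [c] ≠ ([] : Mword) := by
      intro c h; simpa using congrArg List.length h
    have h2 : ∀ c : ℕ × Bool, x ++ [c] ≠ [((0:ℕ), false)] := by
      intro c h
      have := congrArg List.length h
      simp at this
      exact hx this
    simp [-Complex.coe_smul, vfam, hx, h1, h2, Prod.ext_iff, inner_add_left, inner_add_right,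
      inner_smul_left, inner_smul_right, inner_dirac2]
  · by_cases hxy : x = y
    · subst hxy
      simp [-Complex.coe_smul, -inner_self_eq_norm_sq_to_K, vfam, hx, Prod.ext_iff, concat_eq_iff, inner_add_left, inner_add_right,
        inner_smul_left, inner_smul_right, inner_dirac2, Complex.conj_ofReal, hsq]
    · simp [-Complex.coe_smul, vfam, hx, hy, hxy, Prod.ext_iff, concat_eq_iff, inner_add_left,
        inner_add_right, inner_smul_left, inner_smul_right, inner_dirac2]

lemma dense_span_dirac1 :
    Dense (Submodule.span ℂ (Set.range dirac1) : Set Hone) := by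
  intro f
  have hs : HasSum (fun i => lp.single 2 i (f i)) f :=
    lp.hasSum_single (by norm_num) f
  refine mem_closure_of_tendsto hs (Filter.Eventually.of_forall fun s => ?_)
  refine Submodule.sum_mem _ fun i _ => ?_
  have h : lp.single 2 i (f i) = (f i) • dirac1 i := by
    rw [dirac1, ← lp.single_smul, smul_eq_mul, mul_one]
  rw [h]
  exact Submodule.smul_mem _ _ (Submodule.subset_span ⟨i, rfl⟩)

/-- For every `0 < α < 1` (with `β = √(1 − α²)`) the family `(v_x)_{x ∈ M}`
is an orthonormal family in `ℓ²(M × M)`; consequently there is a unique continuous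
linear isometry `R_α : ℓ²(M) → ℓ²(M × M)` with `R_α δ_x = v_x` for all `x ∈ M`. -/
theorem stmt11 (α β : ℝ) (hα0 : 0 < α) (hα1 : α < 1)
    (hβ : β = Real.sqrt (1 - α ^ 2)) :
    Orthonormal ℂ (vfam α β) ∧
      ∃! R : Hone →ₗᵢ[ℂ] Htwo, ∀ x : Mword, R (dirac1 x) = vfam α β x := by
  have hv := vfam_orthonormal α β hα0 hα1 hβ
  refine ⟨hv, ?_⟩
  let R : Hone →ₗᵢ[ℂ] Htwo := hv.orthogonalFamily.linearIsometry
  have hRx : ∀ x : Mword, R (dirac1 x) = vfam α β x := by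
    intro x
    show hv.orthogonalFamily.linearIsometry (lp.single 2 x 1) = vfam α β x
    rw [hv.orthogonalFamily.linearIsometry_apply_single,
      LinearIsometry.toSpanSingleton_apply, one_smul]
  refine ⟨R, hRx, ?_⟩
  intro R' hR'
  haveI : T2Space Htwo := inferInstanceAs (T2Space (lp (fun _ : Mword × Mword => ℂ) 2))
  have h : R'.toContinuousLinearMap = R.toContinuousLinearMap := by
    refine ContinuousLinearMap.ext_on dense_span_dirac1 ?_
    rintro _ ⟨x, rfl⟩
    simp only [LinearIsometry.coe_toContinuousLinearMap]
    rw [hR' x, hRx x]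
  exact LinearIsometry.ext fun f => DFunLike.congr_fun h f

end
end

section
/- Let D be a category, e an object of D, and Ξ : D → Grp a functor to the category of groups. Define C_Ξ with the same objects as D, morphism sets Hom_{C_Ξ}(a,b) := Hom_D(a,b) × Ξ(b), identities (id_a, 1), and composition ((f,g) : a ⟶ b) ≫ ((f',g') : b ⟶ c) := (f ≫ f', g' · Ξ(f')(g)). Then C_Ξ is a category; moreover, if D satisfies the left-Ore condition at e and is weakly left-cancellative at e, then so is C_Ξ. -/
open CategoryTheory

universe w v u

/-- Morphisms of the category `C_Ξ` built from a category `D` and a functor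
`Ξ : D ⥤ Grp`: a morphism `a ⟶ b` is a pair consisting of a morphism `a ⟶ b` of `D`
and an element of the group `Ξ(b)`. -/
def CHom {D : Type u} [Category.{v} D] (Ξ : D ⥤ GrpCat.{w}) (a b : D) : Type max v w :=
  (a ⟶ b) × (Ξ.obj b)

/-- The identity morphism `(𝟙 a, 1)` of `C_Ξ` at `a`. -/
def Cid {D : Type u} [Category.{v} D] (Ξ : D ⥤ GrpCat.{w}) (a : D) : CHom Ξ a a :=
  (𝟙 a, 1)

/-- The composition of `C_Ξ`, in diagrammatic order:
`(f, g) ≫ (f', g') = (f ≫ f', g' · Ξ(f')(g))`. -/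
def Ccomp {D : Type u} [Category.{v} D] (Ξ : D ⥤ GrpCat.{w}) {a b c : D}
    (x : CHom Ξ a b) (y : CHom Ξ b c) : CHom Ξ a c :=
  (x.1 ≫ y.1, y.2 * (Ξ.map y.1) x.2)

/-- Let `D` be a category, `e` an object of `D`, and `Ξ : D ⥤ Grp`.
Then `C_Ξ` (same objects as `D`, morphisms `Hom_D(a,b) × Ξ(b)`, identities `(𝟙 a, 1)`,
composition `(f,g) ≫ (f',g') = (f ≫ f', g' · Ξ(f')(g))`) is a category (composition is
associative and unital); moreover, if `D` satisfies the left-Ore condition at `e` and is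
weakly left-cancellative at `e`, then so is `C_Ξ`. -/
theorem stmt16 {D : Type u} [Category.{v} D] (e : D) (Ξ : D ⥤ GrpCat.{w})
    (hOre : ∀ {b c : D} (p : e ⟶ b) (q : e ⟶ c),
      ∃ (d : D) (h : b ⟶ d) (k : c ⟶ d), p ≫ h = q ≫ k)
    (hCancel : ∀ {b c : D} (f : e ⟶ b) (p q : b ⟶ c), f ≫ p = f ≫ q →
      ∃ (d : D) (g : c ⟶ d), p ≫ g = q ≫ g) :
    -- `C_Ξ` is a category: associativity and identity laws
    (∀ {a b c d : D} (x : CHom Ξ a b) (y : CHom Ξ b c) (z : CHom Ξ c d),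
      Ccomp Ξ (Ccomp Ξ x y) z = Ccomp Ξ x (Ccomp Ξ y z)) ∧
    (∀ {a b : D} (x : CHom Ξ a b), Ccomp Ξ (Cid Ξ a) x = x) ∧
    (∀ {a b : D} (x : CHom Ξ a b), Ccomp Ξ x (Cid Ξ b) = x) ∧
    -- `C_Ξ` satisfies the left-Ore condition at `e`
    (∀ {b c : D} (p : CHom Ξ e b) (q : CHom Ξ e c),
      ∃ (d : D) (h : CHom Ξ b d) (k : CHom Ξ c d), Ccomp Ξ p h = Ccomp Ξ q k) ∧
    -- `C_Ξ` is weakly left-cancellative at `e`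
    (∀ {b c : D} (f : CHom Ξ e b) (p q : CHom Ξ b c), Ccomp Ξ f p = Ccomp Ξ f q →
      ∃ (d : D) (g : CHom Ξ c d), Ccomp Ξ p g = Ccomp Ξ q g) := by
  refine ⟨?_, ?_, ?_, ?_, ?_⟩
  · intro a b c d x y z
    simp [Ccomp, mul_assoc]
    rfl
  · intro a b x
    simp [Ccomp, Cid]
    rfl
  · intro a b x
    simp [Ccomp, Cid]
    rfl
  · intro b c p q
    obtain ⟨d, h, k, hw⟩ := hOre p.1 q.1
    exact ⟨d, (h, 1), (k, (Ξ.map h p.2) * (Ξ.map k q.2)⁻¹), by simp [Ccomp, hw]; rfl⟩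
  · intro b c f p q hpq
    have h1 : f.1 ≫ p.1 = f.1 ≫ q.1 := congrArg Prod.fst hpq
    have h2 : p.2 * Ξ.map p.1 f.2 = q.2 * Ξ.map q.1 f.2 := congrArg Prod.snd hpq
    obtain ⟨d, g, hg⟩ := hCancel f.1 p.1 q.1 h1
    refine ⟨d, (g, 1), ?_⟩
    have key : Ξ.map g p.2 = Ξ.map g q.2 := by
      have h3 := congrArg (Ξ.map g) h2
      simp only [map_mul] at h3
      have e1 : (Ξ.map g) ((Ξ.map p.1) f.2) = (Ξ.map g) ((Ξ.map q.1) f.2) := by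
        have h4 : Ξ.map (p.1 ≫ g) f.2 = Ξ.map (q.1 ≫ g) f.2 := by rw [hg]
        simpa [Ξ.map_comp] using h4
      rw [e1] at h3
      exact mul_right_cancel h3
    simp [Ccomp, hg, key]
    rfl
end
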